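/- Let a_1, ..., a_n (n ≥ 3) be real numbers and set b = a_1 + a_2 + ... + a_n. If b^2 = (n-1)(c + Σ a_i^2) for some real c, then 2 a_1 a_2 ≥ c, with equality if and only if a_1 + a_2 = a_3 = ... = a_n. -/

import Mathlib

/-!
Put `u = (a₁ + a₂, a₃, …, aₙ)`, a vector of `n - 1` numbers with the same sum `b`. The hypothesis
rewrites as `(n - 1) (2 a₁ a₂ - c) = (n - 1) ∑ uᵢ² - (∑ uᵢ)²`, and the right-hand side is the
Cauchy–Schwarz defect of `u`: it is nonnegative and vanishes exactly when all `uᵢ` are equal.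
-/

open Finset

theorem two_mul_card_mul_sum_sq_sub_sq_sum {ι R : Type*} [CommRing R] (s : Finset ι)
    (u : ι → R) :
    2 * (#s * ∑ i ∈ s, u i ^ 2 - (∑ i ∈ s, u i) ^ 2) = ∑ i ∈ s, ∑ j ∈ s, (u i - u j) ^ 2 := by
  simp only [sub_sq, sum_add_distrib, sum_sub_distrib, sum_const, nsmul_eq_mul, ← mul_sum,
    ← sum_mul, mul_assoc]
  ring

theorem sq_sum_eq_card_mul_sum_sq_iff {ι R : Type*} [CommRing R] [LinearOrder R]
    [IsStrictOrderedRing R] {s : Finset ι} {u : ι → R} :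
    (∑ i ∈ s, u i) ^ 2 = #s * ∑ i ∈ s, u i ^ 2 ↔ ∀ i ∈ s, ∀ j ∈ s, u i = u j := by
  rw [eq_comm, ← sub_eq_zero, ← mul_eq_zero_iff_left (two_ne_zero' R),
    two_mul_card_mul_sum_sq_sub_sq_sum,
    sum_eq_zero_iff_of_nonneg fun i _ => sum_nonneg fun j _ => sq_nonneg _]
  refine forall₂_congr fun i _ => ?_
  rw [sum_eq_zero_iff_of_nonneg fun j _ => sq_nonneg _]
  simp only [sq_eq_zero_iff, sub_eq_zero]

theorem Fin.forall_cons_eq_cons_iff {α : Type*} {m : ℕ} (x : α) (v : Fin m → α) :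
    (∀ i j, (Fin.cons x v : Fin (m + 1) → α) i = (Fin.cons x v : Fin (m + 1) → α) j) ↔
      ∀ j, v j = x := by
  simp only [Fin.forall_fin_succ, Fin.cons_zero, Fin.cons_succ]
  constructor
  · exact fun h j => (h.1.2 j).symm
  · intro h
    exact ⟨⟨trivial, fun j => (h j).symm⟩, fun i => ⟨h i, fun j => (h i).trans (h j).symm⟩⟩

/-- Chen's algebraic lemma (Chen 1993, Lemma 3.1). -/
theorem chen_algebraic_lemma (n : ℕ) (hn : 3 ≤ n) (a : Fin n → ℝ) (c : ℝ)
    (b : ℝ) (hb : b = ∑ i, a i)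
    (h : b ^ 2 = ((n : ℝ) - 1) * (c + ∑ i, (a i) ^ 2)) :
    2 * a ⟨0, by omega⟩ * a ⟨1, by omega⟩ ≥ c ∧
      (2 * a ⟨0, by omega⟩ * a ⟨1, by omega⟩ = c ↔
        ∀ i : Fin n, 2 ≤ (i : ℕ) → a i = a ⟨0, by omega⟩ + a ⟨1, by omega⟩) := by
  obtain ⟨m, rfl⟩ : ∃ m, n = m + 2 := ⟨n - 2, by omega⟩
  set u : Fin (m + 1) → ℝ := Fin.cons (a 0 + a 1) fun j => a j.succ.succ
  have hdefect : ((m : ℝ) + 1) * (2 * a 0 * a 1 - c) =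
      (m + 1) * ∑ i, u i ^ 2 - (∑ i, u i) ^ 2 := by
    simp only [hb, Fin.sum_univ_succ (n := m + 1), Fin.sum_univ_succ (n := m),
      Fin.succ_zero_eq_one, Nat.cast_add, Nat.cast_ofNat] at h
    simp only [u, Fin.sum_univ_succ (n := m), Fin.cons_zero, Fin.cons_succ]
    linear_combination h
  have hCS : (∑ i, u i) ^ 2 ≤ (m + 1) * ∑ i, u i ^ 2 := by
    simpa using sq_sum_le_card_mul_sum_sq (s := univ) (f := u)
  refine ⟨?_, ?_⟩
  · show 2 * a 0 * a 1 ≥ c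
    have hscaled : 0 ≤ ((m : ℝ) + 1) * (2 * a 0 * a 1 - c) := hdefect ▸ sub_nonneg.2 hCS
    exact sub_nonneg.1 (nonneg_of_mul_nonneg_right hscaled (by positivity))
  · show 2 * a 0 * a 1 = c ↔ _
    calc 2 * a 0 * a 1 = c ↔ (∑ i, u i) ^ 2 = #(univ : Finset (Fin (m + 1))) * ∑ i, u i ^ 2 := by
          rw [← sub_eq_zero, ← mul_eq_zero_iff_left (by positivity : (m : ℝ) + 1 ≠ 0), hdefect,
            sub_eq_zero, eq_comm, card_univ, Fintype.card_fin, Nat.cast_succ]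
      _ ↔ ∀ i j, u i = u j := by simp only [sq_sum_eq_card_mul_sum_sq_iff, mem_univ, forall_const]
      _ ↔ ∀ j : Fin m, a j.succ.succ = a 0 + a 1 := Fin.forall_cons_eq_cons_iff _ _
      _ ↔ _ := by simp [Fin.forall_fin_succ]
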